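/- Suppose the tableau for an input formula θ is built using the specific restrictive cut conditions (C1) and (C2). If the final tableau T^θ is open, then there exists a CMAEHS satisfying θ. -/
import Mathlib


set_option autoImplicit false

/-- A coalition is a nonempty finite set of agents. -/
abbrev Coalition (Agent : Type) : Type := {A : Finset Agent // A.Nonempty}

/-- Formulas of the logic CMAEL(CD). -/
inductive Formula (Agent AP : Type) : Type where
  | atom : AP → Formula Agent AP
  | neg  : Formula Agent AP → Formula Agent AP
  | conj : Formula Agent AP → Formula Agent AP → Formula Agent AP
  | D    : Coalition Agent → Formula Agent AP → Formula Agent AP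
  | C    : Coalition Agent → Formula Agent AP → Formula Agent AP

/-- The singleton coalition `{a}`. -/
def single {Agent : Type} (a : Agent) : Coalition Agent :=
  ⟨{a}, Finset.singleton_nonempty a⟩

/-- A coalitional multiagent epistemic pseudo-model (pseudo-CMAEM):
each `RD A` is an equivalence relation, and `RD A ⊆ RD B` whenever `B ⊆ A`. -/
structure PseudoCMAEM (Agent AP : Type) where
  State : Type
  nonempty : Nonempty State
  RD : Coalition Agent → State → State → Prop
  equiv : ∀ A, Equivalence (RD A)
  mono : ∀ (A B : Coalition Agent), B.1 ⊆ A.1 → ∀ s t, RD A s t → RD B s t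
  label : State → Set AP

namespace PseudoCMAEM

variable {Agent AP : Type}

/-- `RC A` is the reflexive-transitive closure of `⋃_{∅ ≠ B ⊆ A} RD B`. -/
def RC (M : PseudoCMAEM Agent AP) (A : Coalition Agent) : M.State → M.State → Prop :=
  Relation.ReflTransGen (fun s t => ∃ B : Coalition Agent, B.1 ⊆ A.1 ∧ M.RD B s t)

/-- Truth at a state (standard Kripke clauses). -/
def sat (M : PseudoCMAEM Agent AP) : M.State → Formula Agent AP → Prop
  | s, .atom p => p ∈ M.label s
  | s, .neg φ => ¬ sat M s φ
  | s, .conj φ ψ => sat M s φ ∧ sat M s ψ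
  | s, .D A φ => ∀ t, M.RD A s t → sat M t φ
  | s, .C A φ => ∀ t, M.RC A s t → sat M t φ

/-- `t` is `A`-reachable from `s`: `s = t` or a finite chain of single-agent `RD` steps
with agents from `A`. -/
def AReach (M : PseudoCMAEM Agent AP) (A : Coalition Agent) : M.State → M.State → Prop :=
  Relation.ReflTransGen (fun s t => ∃ a ∈ A.1, M.RD (single a) s t)

end PseudoCMAEM

/-- A coalitional multiagent epistemic model (CMAEM): additionally
`RD A = ⋂_{a ∈ A} RD {a}`. -/
structure CMAEM (Agent AP : Type) extends PseudoCMAEM Agent AP where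
  inter : ∀ (A : Coalition Agent) (s t : State), RD A s t ↔ ∀ a ∈ A.1, RD (single a) s t

namespace CMAEM

variable {Agent AP : Type}

abbrev sat (M : CMAEM Agent AP) : M.State → Formula Agent AP → Prop :=
  M.toPseudoCMAEM.sat

abbrev RC (M : CMAEM Agent AP) : Coalition Agent → M.State → M.State → Prop :=
  M.toPseudoCMAEM.RC

end CMAEM

/-- `AlphaComp χ ψ` : `ψ` is an α-component of the α-formula `χ`. -/
inductive AlphaComp {Agent AP : Type} : Formula Agent AP → Formula Agent AP → Prop where
  | negneg (φ : Formula Agent AP) : AlphaComp (.neg (.neg φ)) φ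
  | conjL (φ ψ : Formula Agent AP) : AlphaComp (.conj φ ψ) φ
  | conjR (φ ψ : Formula Agent AP) : AlphaComp (.conj φ ψ) ψ
  | dSelf (A : Coalition Agent) (φ : Formula Agent AP) : AlphaComp (.D A φ) (.D A φ)
  | dComp (A : Coalition Agent) (φ : Formula Agent AP) : AlphaComp (.D A φ) φ
  | cComp (A : Coalition Agent) (φ : Formula Agent AP) : AlphaComp (.C A φ) φ
  | cD (A : Coalition Agent) (φ : Formula Agent AP) {a : Agent} (ha : a ∈ A.1) :
      AlphaComp (.C A φ) (.D (single a) (.C A φ))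

/-- α-formulas: `¬¬φ`, `φ∧ψ`, `D_A φ`, `C_A φ`. -/
def IsAlpha {Agent AP : Type} : Formula Agent AP → Prop
  | .neg (.neg _) => True
  | .conj _ _ => True
  | .D _ _ => True
  | .C _ _ => True
  | _ => False

/-- `BetaComp χ ψ` : `ψ` is a β-component of the β-formula `χ`. -/
inductive BetaComp {Agent AP : Type} : Formula Agent AP → Formula Agent AP → Prop where
  | nconjL (φ ψ : Formula Agent AP) : BetaComp (.neg (.conj φ ψ)) (.neg φ)
  | nconjR (φ ψ : Formula Agent AP) : BetaComp (.neg (.conj φ ψ)) (.neg ψ)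
  | ncComp (A : Coalition Agent) (φ : Formula Agent AP) : BetaComp (.neg (.C A φ)) (.neg φ)
  | ncD (A : Coalition Agent) (φ : Formula Agent AP) {a : Agent} (ha : a ∈ A.1) :
      BetaComp (.neg (.C A φ)) (.neg (.D (single a) (.C A φ)))

/-- β-formulas: `¬(φ∧ψ)`, `¬C_A φ`. -/
def IsBeta {Agent AP : Type} : Formula Agent AP → Prop
  | .neg (.conj _ _) => True
  | .neg (.C _ _) => True
  | _ => False

section SetsOfFormulas

variable {Agent AP : Type}

/-- A set of formulas is patently inconsistent if it contains a pair `φ`, `¬φ`. -/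
def PatInc (Δ : Set (Formula Agent AP)) : Prop := ∃ φ, φ ∈ Δ ∧ Formula.neg φ ∈ Δ

/-- Fully expanded set of formulas. -/
def FullyExpandedSet (Δ : Set (Formula Agent AP)) : Prop :=
  ¬ PatInc Δ ∧
  (∀ χ ∈ Δ, ∀ ψ, AlphaComp χ ψ → ψ ∈ Δ) ∧
  (∀ χ ∈ Δ, IsBeta χ → ∃ ψ, BetaComp χ ψ ∧ ψ ∈ Δ)

/-- The subformulas of a formula. -/
def subf : Formula Agent AP → Set (Formula Agent AP)
  | .atom p => {Formula.atom p}
  | .neg φ => insert (Formula.neg φ) (subf φ)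
  | .conj φ ψ => insert (Formula.conj φ ψ) (subf φ ∪ subf ψ)
  | .D A φ => insert (Formula.D A φ) (subf φ)
  | .C A φ => insert (Formula.C A φ) (subf φ)

end SetsOfFormulas

section Expansion

variable {Agent AP : Type}

/-- One set-replacement step of the procedure `FullExpansion`, acting on a family of sets
of formulas; patently inconsistent sets are discarded immediately. -/
inductive FEStep : Set (Set (Formula Agent AP)) → Set (Set (Formula Agent AP)) → Prop where
  | alpha {F : Set (Set (Formula Agent AP))} {Φ : Set (Formula Agent AP)}
      {χ : Formula Agent AP} (hΦ : Φ ∈ F) (hχ : χ ∈ Φ) (hα : IsAlpha χ) :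
      FEStep F ((F \ {Φ}) ∪ {Δ | Δ = Φ ∪ {ψ | AlphaComp χ ψ} ∧ ¬ PatInc Δ})
  | beta {F : Set (Set (Formula Agent AP))} {Φ : Set (Formula Agent AP)}
      {χ : Formula Agent AP} (hΦ : Φ ∈ F) (hχ : χ ∈ Φ) (hβ : IsBeta χ)
      (hnone : ∀ ψ, BetaComp χ ψ → ψ ∉ Φ) :
      FEStep F ((F \ {Φ}) ∪ {Δ | (∃ ψ, BetaComp χ ψ ∧ Δ = insert ψ Φ) ∧ ¬ PatInc Δ})
  | ev {F : Set (Set (Formula Agent AP))} {Φ : Set (Formula Agent AP)}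
      {A : Coalition Agent} {φ : Formula Agent AP}
      (hΦ : Φ ∈ F) (hχ : Formula.neg (.C A φ) ∈ Φ) (hnφ : Formula.neg φ ∉ Φ)
      (hother : ∃ ψ, BetaComp (Formula.neg (.C A φ)) ψ ∧ ψ ≠ Formula.neg φ ∧ ψ ∈ Φ) :
      FEStep F (F ∪ {Δ | Δ = insert (Formula.neg φ) Φ ∧ ¬ PatInc Δ})

/-- The starting family of the expansion procedure: `{Γ}`, unless `Γ` is
patently inconsistent, in which case the empty family. -/
def feInit (Γ : Set (Formula Agent AP)) : Set (Set (Formula Agent AP)) :=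
  {Δ | Δ = Γ ∧ ¬ PatInc Γ}

/-- Type of restrictive cut conditions: a condition on the cut formula, the host formula
it is a subformula of, and the current set. -/
abbrev CutCond (Agent AP : Type) : Type :=
  Formula Agent AP → Formula Agent AP → Set (Formula Agent AP) → Prop

/-- One step of the cut-saturated-expansion procedure: a `FEStep`, or a cut on a
subformula `D_A φ` (resp. `C_A φ`) of a member formula, when `C1` (resp. `C2`) holds. -/
inductive CSEStep (C1 C2 : CutCond Agent AP) :
    Set (Set (Formula Agent AP)) → Set (Set (Formula Agent AP)) → Prop where
  | fe {F F' : Set (Set (Formula Agent AP))} : FEStep F F' → CSEStep C1 C2 F F'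
  | cutD {F : Set (Set (Formula Agent AP))} {Φ : Set (Formula Agent AP)}
      {ψ : Formula Agent AP} {A : Coalition Agent} {φ : Formula Agent AP}
      (hΦ : Φ ∈ F) (hψ : ψ ∈ Φ) (hsub : Formula.D A φ ∈ subf ψ)
      (hc : C1 (Formula.D A φ) ψ Φ) :
      CSEStep C1 C2 F ((F \ {Φ}) ∪
        {Δ | (Δ = insert (Formula.D A φ) Φ ∨ Δ = insert (Formula.neg (Formula.D A φ)) Φ) ∧
              ¬ PatInc Δ})
  | cutC {F : Set (Set (Formula Agent AP))} {Φ : Set (Formula Agent AP)}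
      {ψ : Formula Agent AP} {A : Coalition Agent} {φ : Formula Agent AP}
      (hΦ : Φ ∈ F) (hψ : ψ ∈ Φ) (hsub : Formula.C A φ ∈ subf ψ)
      (hc : C2 (Formula.C A φ) ψ Φ) :
      CSEStep C1 C2 F ((F \ {Φ}) ∪
        {Δ | (Δ = insert (Formula.C A φ) Φ ∨ Δ = insert (Formula.neg (Formula.C A φ)) Φ) ∧
              ¬ PatInc Δ})

/-- The cut-saturated expansions of `Γ`: members of a family reachable from `{Γ}` by
`CSEStep`s on which no `CSEStep` has any further effect (saturation). -/
def CSE (C1 C2 : CutCond Agent AP) (Γ : Set (Formula Agent AP)) :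
    Set (Set (Formula Agent AP)) :=
  {Δ | ∃ F, Relation.ReflTransGen (CSEStep C1 C2) (feInit Γ) F ∧
        (∀ F', CSEStep C1 C2 F F' → F' = F) ∧ Δ ∈ F}

end Expansion

section Hintikka

variable {Agent AP : Type}

/-- The relation `R^C_A` determined by a family of relations `RD`. -/
def RCof {State : Type} (RD : Coalition Agent → State → State → Prop)
    (A : Coalition Agent) : State → State → Prop :=
  Relation.ReflTransGen (fun s t => ∃ B : Coalition Agent, B.1 ⊆ A.1 ∧ RD B s t)

end Hintikka

/-- A coalitional multiagent epistemic Hintikka structure (CMAEHS). -/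
structure CMAEHS (Agent AP : Type) where
  State : Type
  nonempty : Nonempty State
  RD : Coalition Agent → State → State → Prop
  H : State → Set (Formula Agent AP)
  ch1 : ∀ s, FullyExpandedSet (H s)
  ch2 : ∀ s (A : Coalition Agent) (φ : Formula Agent AP),
      Formula.neg (.D A φ) ∈ H s → ∃ t, RD A s t ∧ Formula.neg φ ∈ H t
  ch3 : ∀ s s' (A : Coalition Agent), RD A s s' →
      ∀ (B : Coalition Agent), B.1 ⊆ A.1 →
      ∀ φ : Formula Agent AP, (Formula.D B φ ∈ H s ↔ Formula.D B φ ∈ H s')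
  ch4 : ∀ s (A : Coalition Agent) (φ : Formula Agent AP),
      Formula.neg (.C A φ) ∈ H s → ∃ t, RCof RD A s t ∧ Formula.neg φ ∈ H t

section Tableau

variable {Agent AP : Type}

/-- The prestate created by rule `DR` from a state `Δ` and a formula `¬D_A φ ∈ Δ`. -/
def DRset (A : Coalition Agent) (φ : Formula Agent AP) (Δ : Set (Formula Agent AP)) :
    Set (Formula Agent AP) :=
  ({Formula.neg φ} : Set (Formula Agent AP)) ∪
  {χ ∈ Δ | ∃ (A' : Coalition Agent) (ψ : Formula Agent AP),
      χ = Formula.D A' ψ ∧ A'.1 ⊆ A.1} ∪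
  {χ ∈ Δ | ∃ (A' : Coalition Agent) (ψ : Formula Agent AP),
      χ = Formula.neg (Formula.D A' ψ) ∧ A'.1 ⊆ A.1 ∧
      χ ≠ Formula.neg (Formula.D A φ)} ∪
  {χ ∈ Δ | ∃ (A' : Coalition Agent) (ψ : Formula Agent AP),
      χ = Formula.neg (Formula.C A' ψ) ∧ ∃ a, a ∈ A'.1 ∧ a ∈ A.1}

mutual
  /-- The prestates of the pretableau for input formula `θ`. -/
  inductive IsPrestate (C1 C2 : CutCond Agent AP) (θ : Formula Agent AP) :
      Set (Formula Agent AP) → Prop where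
    | init : IsPrestate C1 C2 θ {θ}
    | dr {Δ : Set (Formula Agent AP)} {A : Coalition Agent} {φ : Formula Agent AP} :
        IsState C1 C2 θ Δ → Formula.neg (.D A φ) ∈ Δ →
        IsPrestate C1 C2 θ (DRset A φ Δ)

  /-- The states of the pretableau for input formula `θ` (rule `SR`). -/
  inductive IsState (C1 C2 : CutCond Agent AP) (θ : Formula Agent AP) :
      Set (Formula Agent AP) → Prop where
    | sr {Γ Δ : Set (Formula Agent AP)} :
        IsPrestate C1 C2 θ Γ → Δ ∈ CSE C1 C2 Γ → IsState C1 C2 θ Δ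
end

/-- The arrow `Δ →^{¬D_A φ} Δ'` of the initial tableau `T_0^θ`
(obtained from `Δ →^{¬D_A φ} Γ ⇢ Δ'` by prestate elimination). -/
def InitArrow (C1 C2 : CutCond Agent AP) (θ : Formula Agent AP)
    (Δ : Set (Formula Agent AP)) (A : Coalition Agent) (φ : Formula Agent AP)
    (Δ' : Set (Formula Agent AP)) : Prop :=
  IsState C1 C2 θ Δ ∧ Formula.neg (.D A φ) ∈ Δ ∧ Δ' ∈ CSE C1 C2 (DRset A φ Δ)

/-- A path realizing the eventuality `¬C_A φ` at a state, within the set `S` of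
(surviving) states, all of whose nodes satisfy the predicate `P`. -/
inductive RealizePath (C1 C2 : CutCond Agent AP) (θ : Formula Agent AP)
    (S : Set (Set (Formula Agent AP))) (P : Set (Formula Agent AP) → Prop)
    (A : Coalition Agent) (φ : Formula Agent AP) : Set (Formula Agent AP) → Prop where
  | base {Δ : Set (Formula Agent AP)} (hS : Δ ∈ S) (hP : P Δ)
      (h : Formula.neg φ ∈ Δ) : RealizePath C1 C2 θ S P A φ Δ
  | step {Δ Δ' : Set (Formula Agent AP)} (hS : Δ ∈ S) (hP : P Δ)
      (hev : Formula.neg (.C A φ) ∈ Δ) {a : Agent} (ha : a ∈ A.1)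
      {ψ : Formula Agent AP} (harr : InitArrow C1 C2 θ Δ (single a) ψ Δ')
      (h : RealizePath C1 C2 θ S P A φ Δ') : RealizePath C1 C2 θ S P A φ Δ

/-- One state-elimination step (rule `E1` or rule `E2`). -/
inductive ElimStep (C1 C2 : CutCond Agent AP) (θ : Formula Agent AP) :
    Set (Set (Formula Agent AP)) → Set (Set (Formula Agent AP)) → Prop where
  | e1 {S : Set (Set (Formula Agent AP))} {Δ : Set (Formula Agent AP)}
      {A : Coalition Agent} {φ : Formula Agent AP}
      (hΔ : Δ ∈ S) (hin : Formula.neg (.D A φ) ∈ Δ)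
      (hno : ∀ Δ' ∈ S, ¬ InitArrow C1 C2 θ Δ A φ Δ') :
      ElimStep C1 C2 θ S (S \ {Δ})
  | e2 {S : Set (Set (Formula Agent AP))} {Δ : Set (Formula Agent AP)}
      {A : Coalition Agent} {φ : Formula Agent AP}
      (hΔ : Δ ∈ S) (hin : Formula.neg (.C A φ) ∈ Δ)
      (hno : ¬ RealizePath C1 C2 θ S (fun _ => True) A φ Δ) :
      ElimStep C1 C2 θ S (S \ {Δ})

/-- `S` is the set of states of the final tableau `T^θ`: obtained from the states of the
initial tableau `T_0^θ` by state-elimination steps, with no further step applicable. -/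
def FinalTableau (C1 C2 : CutCond Agent AP) (θ : Formula Agent AP)
    (S : Set (Set (Formula Agent AP))) : Prop :=
  Relation.ReflTransGen (ElimStep C1 C2 θ) {Δ | IsState C1 C2 θ Δ} S ∧
  ∀ S', ¬ ElimStep C1 C2 θ S S'

/-- A set of formulas satisfiable (at a single state) in some CMAEM. -/
def SatSet (Δ : Set (Formula Agent AP)) : Prop :=
  ∃ (M : CMAEM Agent AP) (s : M.State), ∀ χ ∈ Δ, M.sat s χ

/-- The specific restrictive condition (C1) for cuts on `D_A φ`. -/
def specC1 : CutCond Agent AP := fun χ ψ Δ =>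
  ∃ (A : Coalition Agent) (φ : Formula Agent AP), χ = Formula.D A φ ∧
    ((∃ (B : Coalition Agent) (δ : Formula Agent AP),
        (ψ = Formula.D B δ ∨ ψ = Formula.neg (Formula.D B δ)) ∧
        ∃ (E : Coalition Agent) (ε : Formula Agent AP),
          Formula.neg (Formula.D E ε) ∈ Δ ∧ A.1 ⊆ E.1 ∧ B.1 ⊆ E.1) ∨
     (∃ (B : Coalition Agent) (δ : Formula Agent AP),
        ψ = Formula.neg (Formula.C B δ) ∧
        ∃ (E : Coalition Agent) (ε : Formula Agent AP),
          Formula.neg (Formula.D E ε) ∈ Δ ∧ A.1 ⊆ E.1 ∧ ∃ a, a ∈ B.1 ∧ a ∈ E.1))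

/-- The specific restrictive condition (C2) for cuts on `C_A φ`. -/
def specC2 : CutCond Agent AP := fun χ ψ Δ =>
  ∃ (A : Coalition Agent) (φ : Formula Agent AP), χ = Formula.C A φ ∧
    ((∃ (B : Coalition Agent) (δ : Formula Agent AP),
        (ψ = Formula.D B δ ∨ ψ = Formula.neg (Formula.D B δ)) ∧
        ∃ (E : Coalition Agent) (ε : Formula Agent AP),
          Formula.neg (Formula.D E ε) ∈ Δ ∧ B.1 ⊆ E.1 ∧ ∃ a, a ∈ A.1 ∧ a ∈ E.1) ∨
     (∃ (B : Coalition Agent) (δ : Formula Agent AP),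
        ψ = Formula.neg (Formula.C B δ) ∧
        ∃ (E : Coalition Agent) (ε : Formula Agent AP),
          Formula.neg (Formula.D E ε) ∈ Δ ∧ (∃ a, a ∈ A.1 ∧ a ∈ E.1) ∧
          ∃ a, a ∈ B.1 ∧ a ∈ E.1))

end Tableau

section Closure

variable {Agent AP : Type}

/-- The closure `cl(θ)`: smallest set containing `θ`, closed under α- and β-components,
and containing `¬ψ` whenever `¬D_A ψ` is in it. -/
inductive Closure (θ : Formula Agent AP) : Formula Agent AP → Prop where
  | base : Closure θ θ
  | alpha {χ ψ : Formula Agent AP} : Closure θ χ → AlphaComp χ ψ → Closure θ ψ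
  | beta {χ ψ : Formula Agent AP} : Closure θ χ → BetaComp χ ψ → Closure θ ψ
  | negD {A : Coalition Agent} {ψ : Formula Agent AP} :
      Closure θ (Formula.neg (.D A ψ)) → Closure θ (Formula.neg ψ)

/-- The extended closure `ecl(θ)`: smallest set containing `χ` and `¬χ`
for every `χ ∈ cl(θ)`. -/
def ecl (θ : Formula Agent AP) : Set (Formula Agent AP) :=
  {φ | ∃ χ, Closure θ χ ∧ (φ = χ ∨ φ = Formula.neg χ)}

/-- The length of a formula. -/
def Formula.length : Formula Agent AP → ℕ
  | .atom _ => 1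
  | .neg φ => φ.length + 1
  | .conj φ ψ => φ.length + ψ.length + 1
  | .D _ φ => φ.length + 1
  | .C _ φ => φ.length + 1

/-- The agents occurring in a formula. -/
def Formula.agents [DecidableEq Agent] : Formula Agent AP → Finset Agent
  | .atom _ => ∅
  | .neg φ => φ.agents
  | .conj φ ψ => φ.agents ∪ ψ.agents
  | .D A φ => A.1 ∪ φ.agents
  | .C A φ => A.1 ∪ φ.agents

end Closure

/-- The extended labeling `L⁺` of a CMAEM: `L⁺(s) = {φ | M,s ⊨ φ}`. -/
def extLabel {Agent AP : Type} (M : CMAEM Agent AP) (s : M.State) :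
    Set (Formula Agent AP) :=
  {φ | M.sat s φ}


namespace S17

variable {Agent AP : Type}

lemma subf_self (φ : Formula Agent AP) : φ ∈ subf φ := by
  cases φ <;> simp [subf]

lemma subf_trans {ψ χ σ : Formula Agent AP} (h1 : ψ ∈ subf χ) (h2 : χ ∈ subf σ) :
    ψ ∈ subf σ := by
  induction σ with
  | atom p => simp [subf] at h2; subst h2; simpa [subf] using h1
  | neg φ ih =>
    simp only [subf, Set.mem_insert_iff] at h2 ⊢
    rcases h2 with h2 | h2
    · subst h2; simpa [subf] using h1
    · exact Or.inr (ih h2)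
  | conj φ ρ ih1 ih2 =>
    simp only [subf, Set.mem_insert_iff, Set.mem_union] at h2 ⊢
    rcases h2 with h2 | h2 | h2
    · subst h2; simpa [subf] using h1
    · exact Or.inr (Or.inl (ih1 h2))
    · exact Or.inr (Or.inr (ih2 h2))
  | D A φ ih =>
    simp only [subf, Set.mem_insert_iff] at h2 ⊢
    rcases h2 with h2 | h2
    · subst h2; simpa [subf] using h1
    · exact Or.inr (ih h2)
  | C A φ ih =>
    simp only [subf, Set.mem_insert_iff] at h2 ⊢
    rcases h2 with h2 | h2
    · subst h2; simpa [subf] using h1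
    · exact Or.inr (ih h2)

lemma isAlpha_of_alphaComp {χ ψ : Formula Agent AP} (h : AlphaComp χ ψ) : IsAlpha χ := by
  cases h <;> trivial

/-- Provenance closure: an upper bound on formulas appearing during CSE from `Γ`. -/
inductive QS (Γ : Set (Formula Agent AP)) : Formula Agent AP → Prop where
  | mem {χ} : χ ∈ Γ → QS Γ χ
  | sub {χ ψ} : QS Γ χ → ψ ∈ subf χ → QS Γ ψ
  | neg {χ} : QS Γ χ → QS Γ (.neg χ)
  | dC {A : Coalition Agent} {χ : Formula Agent AP} {a : Agent} :
      QS Γ (.C A χ) → a ∈ A.1 → QS Γ (.D (single a) (.C A χ))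

lemma qs_alpha {Γ : Set (Formula Agent AP)} {χ ψ : Formula Agent AP}
    (h : QS Γ χ) (hc : AlphaComp χ ψ) : QS Γ ψ := by
  cases hc with
  | negneg φ => exact h.sub (by simp [subf, subf_self])
  | conjL φ ρ => exact h.sub (by simp [subf, subf_self])
  | conjR φ ρ => exact h.sub (by simp [subf, subf_self])
  | dSelf A φ => exact h
  | dComp A φ => exact h.sub (by simp [subf, subf_self])
  | cComp A φ => exact h.sub (by simp [subf, subf_self])
  | cD A φ ha => exact QS.dC h ha

lemma qs_beta {Γ : Set (Formula Agent AP)} {χ ψ : Formula Agent AP}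
    (h : QS Γ χ) (hc : BetaComp χ ψ) : QS Γ ψ := by
  cases hc with
  | nconjL φ ρ => exact QS.neg (h.sub (by simp [subf, subf_self]))
  | nconjR φ ρ => exact QS.neg (h.sub (by simp [subf, subf_self]))
  | ncComp A φ => exact QS.neg (h.sub (by simp [subf, subf_self]))
  | ncD A φ ha => exact QS.neg (QS.dC (h.sub (by simp [subf, subf_self])) ha)

lemma qs_main {Γ : Set (Formula Agent AP)} {σ : Formula Agent AP} (h : QS Γ σ) :
    (∀ (B : Coalition Agent) (φ : Formula Agent AP), Formula.C B φ ∈ subf σ →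
        ∃ γ ∈ Γ, Formula.C B φ ∈ subf γ) ∧
    (∀ (B : Coalition Agent) (φ : Formula Agent AP), Formula.D B φ ∈ subf σ →
        (∃ γ ∈ Γ, Formula.D B φ ∈ subf γ) ∨
        (∃ (a : Agent) (A'' : Coalition Agent) (φ' : Formula Agent AP),
            B = single a ∧ φ = Formula.C A'' φ' ∧ a ∈ A''.1 ∧
            ∃ γ ∈ Γ, Formula.C A'' φ' ∈ subf γ)) := by
  induction h with
  | mem hγ =>
    exact ⟨fun B φ hs => ⟨_, hγ, hs⟩, fun B φ hs => Or.inl ⟨_, hγ, hs⟩⟩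
  | sub h hs ih =>
    exact ⟨fun B φ h' => ih.1 B φ (subf_trans h' hs),
           fun B φ h' => ih.2 B φ (subf_trans h' hs)⟩
  | neg h ih =>
    refine ⟨fun B φ h' => ?_, fun B φ h' => ?_⟩
    · rcases h' with h' | h'
      · exact absurd h' (by simp)
      · exact ih.1 B φ h'
    · rcases h' with h' | h'
      · exact absurd h' (by simp)
      · exact ih.2 B φ h'
  | dC h ha ih =>
    rename_i A χ a
    refine ⟨fun B φ h' => ?_, fun B φ h' => ?_⟩
    · rcases h' with h' | h'
      · exact absurd h' (by simp)
      · exact ih.1 B φ h'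
    · rcases h' with h' | h'
      · obtain ⟨hB, hφ⟩ := Formula.D.inj h'
        exact Or.inr ⟨a, A, χ, hB, hφ, ha, ih.1 A χ (subf_self _)⟩
      · exact ih.2 B φ h'

/-- The invariant maintained by `CSEStep`. -/
def Inv (Γ Φ : Set (Formula Agent AP)) : Prop :=
  Γ ⊆ Φ ∧ ¬ PatInc Φ ∧ ∀ χ ∈ Φ, QS Γ χ

lemma step_inv {C1 C2 : CutCond Agent AP} {Γ : Set (Formula Agent AP)}
    {F F' : Set (Set (Formula Agent AP))}
    (h : CSEStep C1 C2 F F') (hF : ∀ Φ ∈ F, Inv Γ Φ) : ∀ Φ ∈ F', Inv Γ Φ := by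
  cases h with
  | fe hfe =>
    cases hfe with
    | alpha hΦ hχ hα =>
      rename_i Φ₀ χ
      intro Φ hΦ'
      rcases hΦ' with h' | h'
      · exact hF Φ h'.1
      · obtain ⟨rfl, hpat⟩ := h'
        have h0 := hF _ hΦ
        refine ⟨fun x hx => Or.inl (h0.1 hx), hpat, ?_⟩
        rintro ξ (hξ | hξ)
        · exact h0.2.2 ξ hξ
        · exact qs_alpha (h0.2.2 χ hχ) hξ
    | beta hΦ hχ hβ hnone =>
      rename_i Φ₀ χ
      intro Φ hΦ'
      rcases hΦ' with h' | h'
      · exact hF Φ h'.1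
      · obtain ⟨⟨ψ, hbc, rfl⟩, hpat⟩ := h'
        have h0 := hF _ hΦ
        refine ⟨fun x hx => Or.inr (h0.1 hx), hpat, ?_⟩
        rintro ξ (rfl | hξ)
        · exact qs_beta (h0.2.2 χ hχ) hbc
        · exact h0.2.2 ξ hξ
    | ev hΦ hχ hnφ hother =>
      rename_i Φ₀ A φ
      intro Φ hΦ'
      rcases hΦ' with h' | h'
      · exact hF Φ h'
      · obtain ⟨rfl, hpat⟩ := h'
        have h0 := hF _ hΦ
        refine ⟨fun x hx => Or.inr (h0.1 hx), hpat, ?_⟩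
        rintro ξ (rfl | hξ)
        · exact qs_beta (h0.2.2 _ hχ) (BetaComp.ncComp A φ)
        · exact h0.2.2 ξ hξ
  | cutD hΦ hψ hsub hc =>
    rename_i Φ₀ ψ A φ
    intro Φ hΦ'
    rcases hΦ' with h' | h'
    · exact hF Φ h'.1
    · obtain ⟨hΦeq, hpat⟩ := h'
      have h0 := hF _ hΦ
      have hq : QS Γ (Formula.D A φ) := (h0.2.2 ψ hψ).sub hsub
      rcases hΦeq with rfl | rfl
      · refine ⟨fun x hx => Or.inr (h0.1 hx), hpat, ?_⟩
        rintro ξ (rfl | hξ)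
        · exact hq
        · exact h0.2.2 ξ hξ
      · refine ⟨fun x hx => Or.inr (h0.1 hx), hpat, ?_⟩
        rintro ξ (rfl | hξ)
        · exact hq.neg
        · exact h0.2.2 ξ hξ
  | cutC hΦ hψ hsub hc =>
    rename_i Φ₀ ψ A φ
    intro Φ hΦ'
    rcases hΦ' with h' | h'
    · exact hF Φ h'.1
    · obtain ⟨hΦeq, hpat⟩ := h'
      have h0 := hF _ hΦ
      have hq : QS Γ (Formula.C A φ) := (h0.2.2 ψ hψ).sub hsub
      rcases hΦeq with rfl | rfl
      · refine ⟨fun x hx => Or.inr (h0.1 hx), hpat, ?_⟩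
        rintro ξ (rfl | hξ)
        · exact hq
        · exact h0.2.2 ξ hξ
      · refine ⟨fun x hx => Or.inr (h0.1 hx), hpat, ?_⟩
        rintro ξ (rfl | hξ)
        · exact hq.neg
        · exact h0.2.2 ξ hξ

lemma cse_inv {C1 C2 : CutCond Agent AP} {Γ Δ : Set (Formula Agent AP)}
    (h : Δ ∈ CSE C1 C2 Γ) : Inv Γ Δ := by
  obtain ⟨F, hreach, hsat, hΔ⟩ := h
  have : ∀ Φ ∈ F, Inv Γ Φ := by
    clear hΔ hsat
    induction hreach with
    | refl =>
      rintro Φ ⟨rfl, hpat⟩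
      exact ⟨le_refl _, hpat, fun χ hχ => QS.mem hχ⟩
    | tail _ hstep ih => exact step_inv hstep ih
  exact this Δ hΔ

lemma cse_alpha {C1 C2 : CutCond Agent AP} {Γ Δ : Set (Formula Agent AP)}
    (h : Δ ∈ CSE C1 C2 Γ) {χ ψ : Formula Agent AP}
    (hχ : χ ∈ Δ) (hc : AlphaComp χ ψ) : ψ ∈ Δ := by
  obtain ⟨F, hreach, hsat, hΔ⟩ := h
  have heq := hsat _ (CSEStep.fe (FEStep.alpha hΔ hχ (isAlpha_of_alphaComp hc)))
  have hΔ' : Δ ∈ (F \ {Δ}) ∪ {Δ' | Δ' = Δ ∪ {ψ | AlphaComp χ ψ} ∧ ¬ PatInc Δ'} := by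
    rw [heq]; exact hΔ
  rcases hΔ' with h' | h'
  · exact absurd rfl h'.2
  · have : Δ ∪ {ψ | AlphaComp χ ψ} = Δ := h'.1.symm
    rw [← this]; exact Or.inr hc

lemma cse_beta {C1 C2 : CutCond Agent AP} {Γ Δ : Set (Formula Agent AP)}
    (h : Δ ∈ CSE C1 C2 Γ) {χ : Formula Agent AP}
    (hχ : χ ∈ Δ) (hβ : IsBeta χ) : ∃ ψ, BetaComp χ ψ ∧ ψ ∈ Δ := by
  by_contra hno
  push_neg at hno
  obtain ⟨F, hreach, hsat, hΔ⟩ := h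
  have heq := hsat _ (CSEStep.fe (FEStep.beta hΔ hχ hβ hno))
  have hΔ' : Δ ∈ (F \ {Δ}) ∪
      {Δ' | (∃ ψ, BetaComp χ ψ ∧ Δ' = insert ψ Δ) ∧ ¬ PatInc Δ'} := by
    rw [heq]; exact hΔ
  rcases hΔ' with h' | h'
  · exact absurd rfl h'.2
  · obtain ⟨⟨ψ, hbc, heq'⟩, _⟩ := h'
    exact hno ψ hbc (by rw [heq']; exact Set.mem_insert _ _)

lemma cse_fullyExpanded {C1 C2 : CutCond Agent AP} {Γ Δ : Set (Formula Agent AP)}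
    (h : Δ ∈ CSE C1 C2 Γ) : FullyExpandedSet Δ :=
  ⟨(cse_inv h).2.1, fun χ hχ ψ hc => cse_alpha h hχ hc, fun χ hχ hβ => cse_beta h hχ hβ⟩

lemma cse_cutD {C1 C2 : CutCond Agent AP} {Γ Δ : Set (Formula Agent AP)}
    (h : Δ ∈ CSE C1 C2 Γ) {ψ : Formula Agent AP} {A : Coalition Agent}
    {φ : Formula Agent AP} (hψ : ψ ∈ Δ) (hsub : Formula.D A φ ∈ subf ψ)
    (hc : C1 (Formula.D A φ) ψ Δ) :
    Formula.D A φ ∈ Δ ∨ Formula.neg (Formula.D A φ) ∈ Δ := by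
  obtain ⟨F, hreach, hsat, hΔ⟩ := h
  have heq := hsat _ (CSEStep.cutD hΔ hψ hsub hc)
  have hΔ' : Δ ∈ (F \ {Δ}) ∪
      {Δ' | (Δ' = insert (Formula.D A φ) Δ ∨ Δ' = insert (Formula.neg (Formula.D A φ)) Δ) ∧
            ¬ PatInc Δ'} := by rw [heq]; exact hΔ
  rcases hΔ' with h' | h'
  · exact absurd rfl h'.2
  · rcases h'.1 with h' | h'
    · exact Or.inl (by rw [h']; exact Set.mem_insert _ _)
    · exact Or.inr (by rw [h']; exact Set.mem_insert _ _)

lemma cse_cutC {C1 C2 : CutCond Agent AP} {Γ Δ : Set (Formula Agent AP)}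
    (h : Δ ∈ CSE C1 C2 Γ) {ψ : Formula Agent AP} {A : Coalition Agent}
    {φ : Formula Agent AP} (hψ : ψ ∈ Δ) (hsub : Formula.C A φ ∈ subf ψ)
    (hc : C2 (Formula.C A φ) ψ Δ) :
    Formula.C A φ ∈ Δ ∨ Formula.neg (Formula.C A φ) ∈ Δ := by
  obtain ⟨F, hreach, hsat, hΔ⟩ := h
  have heq := hsat _ (CSEStep.cutC hΔ hψ hsub hc)
  have hΔ' : Δ ∈ (F \ {Δ}) ∪
      {Δ' | (Δ' = insert (Formula.C A φ) Δ ∨ Δ' = insert (Formula.neg (Formula.C A φ)) Δ) ∧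
            ¬ PatInc Δ'} := by rw [heq]; exact hΔ
  rcases hΔ' with h' | h'
  · exact absurd rfl h'.2
  · rcases h'.1 with h' | h'
    · exact Or.inl (by rw [h']; exact Set.mem_insert _ _)
    · exact Or.inr (by rw [h']; exact Set.mem_insert _ _)

/-- Membership facts about `DRset`. -/
lemma drset_neg (A : Coalition Agent) (φ : Formula Agent AP) (Δ : Set (Formula Agent AP)) :
    Formula.neg φ ∈ DRset A φ Δ :=
  Or.inl (Or.inl (Or.inl rfl))

lemma drset_D {A : Coalition Agent} {φ : Formula Agent AP} {Δ : Set (Formula Agent AP)}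
    {B : Coalition Agent} {ψ : Formula Agent AP} (h : Formula.D B ψ ∈ Δ)
    (hB : B.1 ⊆ A.1) : Formula.D B ψ ∈ DRset A φ Δ :=
  Or.inl (Or.inl (Or.inr ⟨h, B, ψ, rfl, hB⟩))

lemma drset_negD {A : Coalition Agent} {φ : Formula Agent AP} {Δ : Set (Formula Agent AP)}
    {B : Coalition Agent} {ψ : Formula Agent AP} (h : Formula.neg (Formula.D B ψ) ∈ Δ)
    (hB : B.1 ⊆ A.1) (hne : Formula.neg (Formula.D B ψ) ≠ Formula.neg (Formula.D A φ)) :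
    Formula.neg (Formula.D B ψ) ∈ DRset A φ Δ :=
  Or.inl (Or.inr ⟨h, B, ψ, rfl, hB, hne⟩)

lemma drset_negC {A : Coalition Agent} {φ : Formula Agent AP} {Δ : Set (Formula Agent AP)}
    {B : Coalition Agent} {ψ : Formula Agent AP} (h : Formula.neg (Formula.C B ψ) ∈ Δ)
    {a : Agent} (ha : a ∈ B.1) (ha' : a ∈ A.1) :
    Formula.neg (Formula.C B ψ) ∈ DRset A φ Δ :=
  Or.inr ⟨h, B, ψ, rfl, a, ha, ha'⟩

/-- Host extraction from `DRset`: any non-negation subformula source. -/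
lemma host_of_drset {A' : Coalition Agent} {φ₀ : Formula Agent AP}
    {Δ : Set (Formula Agent AP)} (htrig : Formula.neg (Formula.D A' φ₀) ∈ Δ)
    {ξ : Formula Agent AP} (hnotneg : ∀ χ, ξ ≠ Formula.neg χ)
    (h : ∃ γ ∈ DRset A' φ₀ Δ, ξ ∈ subf γ) :
    ∃ ψh ∈ Δ, ξ ∈ subf ψh ∧
      ((∃ (C : Coalition Agent) (δ : Formula Agent AP),
          (ψh = Formula.D C δ ∨ ψh = Formula.neg (Formula.D C δ)) ∧ C.1 ⊆ A'.1) ∨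
       (∃ (C : Coalition Agent) (δ : Formula Agent AP),
          ψh = Formula.neg (Formula.C C δ) ∧ ∃ a, a ∈ C.1 ∧ a ∈ A'.1)) := by
  obtain ⟨γ, hγ, hsub⟩ := h
  rcases hγ with ((hγ | hγ) | hγ) | hγ
  · -- γ = ¬φ₀
    have hγ' : γ = Formula.neg φ₀ := hγ
    subst hγ'
    rcases hsub with hsub | hsub
    · exact absurd hsub (hnotneg φ₀)
    · refine ⟨Formula.neg (Formula.D A' φ₀), htrig, ?_, Or.inl ⟨A', φ₀, Or.inr rfl, le_refl _⟩⟩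
      exact Set.mem_insert_of_mem _ (Set.mem_insert_of_mem _ hsub)
  · obtain ⟨hmem, B, ψ, rfl, hB⟩ := hγ
    exact ⟨_, hmem, hsub, Or.inl ⟨B, ψ, Or.inl rfl, hB⟩⟩
  · obtain ⟨hmem, B, ψ, rfl, hB, _⟩ := hγ
    exact ⟨_, hmem, hsub, Or.inl ⟨B, ψ, Or.inr rfl, hB⟩⟩
  · obtain ⟨hmem, B, ψ, rfl, a, ha, ha'⟩ := hγ
    exact ⟨_, hmem, hsub, Or.inr ⟨B, ψ, rfl, a, ha, ha'⟩⟩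

/-- The key "backward CH3" lemma. -/
lemma key {θ : Formula Agent AP} {Δ Δ' : Set (Formula Agent AP)}
    (hΔstate : IsState specC1 specC2 θ Δ)
    {A' : Coalition Agent} {φ₀ : Formula Agent AP}
    (htrig : Formula.neg (Formula.D A' φ₀) ∈ Δ)
    (hΔ' : Δ' ∈ CSE specC1 specC2 (DRset A' φ₀ Δ))
    {B : Coalition Agent} {φ : Formula Agent AP}
    (hB : B.1 ⊆ A'.1) (hmem : Formula.D B φ ∈ Δ') :
    Formula.D B φ ∈ Δ := by
  obtain ⟨Γ₀, hΔcse⟩ : ∃ Γ₀, Δ ∈ CSE specC1 specC2 Γ₀ := by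
    cases hΔstate with | sr hp hm => exact ⟨_, hm⟩
  have invΔ' := cse_inv hΔ'
  have hq : QS (DRset A' φ₀ Δ) (Formula.D B φ) := invΔ'.2.2 _ hmem
  rcases (qs_main hq).2 B φ (subf_self _) with hcase | hcase
  · -- D B φ is a subformula of some DRset member
    obtain ⟨ψh, hψh, hsubh, hshape⟩ := host_of_drset htrig (by intro χ h; cases h) hcase
    have hc1 : specC1 (Formula.D B φ) ψh Δ := by
      refine ⟨B, φ, rfl, ?_⟩
      rcases hshape with ⟨C, δ, hsh, hC⟩ | ⟨C, δ, hsh, a, ha, ha'⟩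
      · exact Or.inl ⟨C, δ, hsh, A', φ₀, htrig, hB, hC⟩
      · exact Or.inr ⟨C, δ, hsh, A', φ₀, htrig, hB, a, ha, ha'⟩
    rcases cse_cutD hΔcse hψh hsubh hc1 with hd | hnd
    · exact hd
    · by_cases heq : Formula.neg (Formula.D B φ) = Formula.neg (Formula.D A' φ₀)
      · obtain ⟨hBA, hφφ⟩ := Formula.D.inj (Formula.neg.inj heq)
        subst hBA; subst hφφ
        have h1 : Formula.neg φ ∈ Δ' := invΔ'.1 (drset_neg _ _ _)
        have h2 : φ ∈ Δ' := cse_alpha hΔ' hmem (AlphaComp.dComp _ _)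
        exact absurd ⟨φ, h2, h1⟩ invΔ'.2.1
      · have h1 : Formula.neg (Formula.D B φ) ∈ Δ' := invΔ'.1 (drset_negD hnd hB heq)
        exact absurd ⟨_, hmem, h1⟩ invΔ'.2.1
  · -- D B φ = D_a (C A'' φ')
    obtain ⟨a, A'', φ', rfl, rfl, haA'', hcase⟩ := hcase
    have haA' : a ∈ A'.1 := hB (Finset.mem_singleton_self a)
    obtain ⟨ψh, hψh, hsubh, hshape⟩ := host_of_drset htrig (by intro χ h; cases h) hcase
    have hc2 : specC2 (Formula.C A'' φ') ψh Δ := by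
      refine ⟨A'', φ', rfl, ?_⟩
      rcases hshape with ⟨C, δ, hsh, hC⟩ | ⟨C, δ, hsh, b, hb, hb'⟩
      · exact Or.inl ⟨C, δ, hsh, A', φ₀, htrig, hC, a, haA'', haA'⟩
      · exact Or.inr ⟨C, δ, hsh, A', φ₀, htrig, ⟨a, haA'', haA'⟩, b, hb, hb'⟩
    rcases cse_cutC hΔcse hψh hsubh hc2 with hcc | hnc
    · exact cse_alpha hΔcse hcc (AlphaComp.cD A'' φ' haA'')
    · have h1 : Formula.neg (Formula.C A'' φ') ∈ Δ' := invΔ'.1 (drset_negC hnc haA'' haA')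
      have h2 : Formula.C A'' φ' ∈ Δ' := cse_alpha hΔ' hmem (AlphaComp.dComp _ _)
      have h3 : φ' ∈ Δ' := cse_alpha hΔ' h2 (AlphaComp.cComp _ _)
      obtain ⟨ψb, hbc, hψb⟩ := cse_beta hΔ' h1 (by trivial)
      exfalso
      cases hbc with
      | ncComp => exact invΔ'.2.1 ⟨φ', h3, hψb⟩
      | ncD _ _ hb =>
        exact invΔ'.2.1 ⟨_, cse_alpha hΔ' h2 (AlphaComp.cD A'' φ' hb), hψb⟩

lemma realize_mem {C1 C2 : CutCond Agent AP} {θ : Formula Agent AP}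
    {S : Set (Set (Formula Agent AP))} {P : Set (Formula Agent AP) → Prop}
    {A : Coalition Agent} {φ : Formula Agent AP} {Δ : Set (Formula Agent AP)}
    (h : RealizePath C1 C2 θ S P A φ Δ) : Δ ∈ S := by
  cases h with
  | base hS _ _ => exact hS
  | step hS _ _ _ _ _ => exact hS

/-- The `RD` relations of the Hintikka structure built from the final tableau. -/
def myRD (C1 C2 : CutCond Agent AP) (θ : Formula Agent AP)
    (S : Set (Set (Formula Agent AP))) (A : Coalition Agent)
    (s t : {Δ // Δ ∈ S}) : Prop :=
  ∃ (A' : Coalition Agent) (ψ : Formula Agent AP),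
    A.1 ⊆ A'.1 ∧ InitArrow C1 C2 θ s.1 A' ψ t.1

lemma realize_to_rcof {C1 C2 : CutCond Agent AP} {θ : Formula Agent AP}
    {S : Set (Set (Formula Agent AP))} {P : Set (Formula Agent AP) → Prop}
    {A : Coalition Agent} {φ : Formula Agent AP} {Δ : Set (Formula Agent AP)}
    (h : RealizePath C1 C2 θ S P A φ Δ) :
    ∀ (hΔ : Δ ∈ S), ∃ t : {Δ // Δ ∈ S},
      RCof (myRD C1 C2 θ S) A ⟨Δ, hΔ⟩ t ∧ Formula.neg φ ∈ t.1 := by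
  induction h with
  | base hS hP hφ =>
    intro hΔ
    exact ⟨⟨_, hΔ⟩, Relation.ReflTransGen.refl, hφ⟩
  | step hS hP hev ha harr h ih =>
    intro hΔ
    rename_i Δ₁ Δ₂ a ψ
    obtain ⟨t, hrc, hφ⟩ := ih (realize_mem h)
    refine ⟨t, Relation.ReflTransGen.head ?_ hrc, hφ⟩
    exact ⟨single a, Finset.singleton_subset_iff.2 ha,
      single a, ψ, le_refl _, harr⟩

end S17

/-- with the specific restrictive cut conditions (C1), (C2): if the final
tableau `T^θ` is open, then there exists a CMAEHS satisfying θ. -/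
theorem statement17 {Agent AP : Type} [Fintype Agent] [Countable AP]
    (hcard : 1 < Fintype.card Agent)
    (θ : Formula Agent AP)
    (S : Set (Set (Formula Agent AP))) (hfin : FinalTableau specC1 specC2 θ S)
    (hopen : ∃ Δ ∈ S, θ ∈ Δ) :
    ∃ (Hs : CMAEHS Agent AP) (s : Hs.State), θ ∈ Hs.H s := by
  classical
  obtain ⟨hreach, hnostep⟩ := hfin
  obtain ⟨Δ₀, hΔ₀S, hθ⟩ := hopen
  -- every surviving set is a state of the initial tableau
  have hSstate : ∀ Δ ∈ S, IsState specC1 specC2 θ Δ := by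
    have hsub : S ⊆ {Δ | IsState specC1 specC2 θ Δ} := by
      clear hnostep hΔ₀S hθ
      induction hreach with
      | refl => exact fun _ h => h
      | tail _ hstep ih =>
        cases hstep with
        | e1 hΔ hin hno => exact fun Δ h => ih h.1
        | e2 hΔ hin hno => exact fun Δ h => ih h.1
    exact fun Δ h => hsub h
  -- E1 cannot fire
  have hE1 : ∀ Δ ∈ S, ∀ (A : Coalition Agent) (φ : Formula Agent AP),
      Formula.neg (.D A φ) ∈ Δ → ∃ Δ' ∈ S, InitArrow specC1 specC2 θ Δ A φ Δ' := by
    intro Δ hΔ A φ hin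
    by_contra h
    push_neg at h
    exact hnostep _ (ElimStep.e1 hΔ hin h)
  -- E2 cannot fire
  have hE2 : ∀ Δ ∈ S, ∀ (A : Coalition Agent) (φ : Formula Agent AP),
      Formula.neg (.C A φ) ∈ Δ →
      RealizePath specC1 specC2 θ S (fun _ => True) A φ Δ := by
    intro Δ hΔ A φ hin
    by_contra h
    exact hnostep _ (ElimStep.e2 hΔ hin h)
  refine ⟨{
    State := {Δ // Δ ∈ S}
    nonempty := ⟨⟨Δ₀, hΔ₀S⟩⟩
    RD := S17.myRD specC1 specC2 θ S
    H := fun s => s.1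
    ch1 := ?_
    ch2 := ?_
    ch3 := ?_
    ch4 := ?_ }, ⟨Δ₀, hΔ₀S⟩, hθ⟩
  · -- CH1
    intro s
    obtain ⟨Γ, hΓ⟩ : ∃ Γ, s.1 ∈ CSE specC1 specC2 Γ := by
      cases hSstate s.1 s.2 with | sr hp hm => exact ⟨_, hm⟩
    exact S17.cse_fullyExpanded hΓ
  · -- CH2
    intro s A φ h
    obtain ⟨Δ', hΔ'S, harr⟩ := hE1 s.1 s.2 A φ h
    refine ⟨⟨Δ', hΔ'S⟩, ⟨A, φ, le_refl _, harr⟩, ?_⟩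
    exact (S17.cse_inv harr.2.2).1 (S17.drset_neg A φ s.1)
  · -- CH3
    rintro s t A ⟨A', ψ, hAA', harr⟩ B hBA φ
    have hBA' : B.1 ⊆ A'.1 := hBA.trans hAA'
    constructor
    · intro hmem
      exact (S17.cse_inv harr.2.2).1 (S17.drset_D hmem hBA')
    · intro hmem
      exact S17.key harr.1 harr.2.1 harr.2.2 hBA' hmem
  · -- CH4
    intro s A φ h
    have hrp := hE2 s.1 s.2 A φ h
    exact S17.realize_to_rcof hrp s.2
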